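/- arXiv:1605.02597 — 6 statements merged into one kernel-verified Lean document; each statement's English description precedes it below -/
import Mathlib

section
/- Let K ≥ 2 be an integer and M, N positive integers. The linear program maximizing KN(λ₁+λ₂) over λ₁,λ₂ ∈ (0,1] subject to λ₁(N + min{M,(K-1)N}) + λ₂N ≤ M and λ₁ + λ₂(1 + N/M) ≤ 1, in the case M < (K-1)N (so min{M,(K-1)N} = M), has optimal value KN(M²+MN)/(M²+N²+MN). -/
/-!
Both constraints are tight at the claimed optimum `λ₁ = M²/D`, `λ₂ = MN/D` with
`D = M² + N² + MN`. Conversely, adding `N` times the first constraint to `M²` times the second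
gives `D (λ₁ + λ₂) ≤ M² + MN` for every feasible point, so these dual multipliers certify
optimality.
-/

open Set

section LinearProgram

variable {c m n l₁ l₂ : ℝ}

lemma add_le_of_interference_constraints (hm : 0 < m) (hn : 0 ≤ n)
    (hA : l₁ * (n + m) + l₂ * n ≤ m) (hB : l₁ + l₂ * (1 + n / m) ≤ 1) :
    l₁ + l₂ ≤ (m ^ 2 + m * n) / (m ^ 2 + n ^ 2 + m * n) := by
  have hB' : l₁ * m + l₂ * (m + n) ≤ m := by
    calc l₁ * m + l₂ * (m + n) = (l₁ + l₂ * (1 + n / m)) * m := by field_simp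
      _ ≤ m := mul_le_of_le_one_left hm.le hB
  rw [le_div_iff₀ (by positivity)]
  nlinarith [mul_le_mul_of_nonneg_left hA hn, mul_le_mul_of_nonneg_left hB' hm.le]

theorem isGreatest_interference_lp (hm : 0 < m) (hn : 0 < n) (hc : 0 ≤ c) :
    IsGreatest {v : ℝ | ∃ l₁ l₂ : ℝ, l₁ ∈ Ioc (0 : ℝ) 1 ∧ l₂ ∈ Ioc (0 : ℝ) 1 ∧
        l₁ * (n + m) + l₂ * n ≤ m ∧ l₁ + l₂ * (1 + n / m) ≤ 1 ∧ v = c * (l₁ + l₂)}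
      (c * (m ^ 2 + m * n) / (m ^ 2 + n ^ 2 + m * n)) := by
  set D := m ^ 2 + n ^ 2 + m * n
  have hD : 0 < D := by positivity
  constructor
  · refine ⟨m ^ 2 / D, m * n / D, ⟨by positivity, ?_⟩, ⟨by positivity, ?_⟩, ?_, ?_, ?_⟩
    · rw [div_le_one hD]; nlinarith
    · rw [div_le_one hD]; nlinarith
    · apply le_of_eq; field_simp; ring
    · apply le_of_eq; field_simp; ring
    · field_simp
  · rintro v ⟨l₁, l₂, -, -, hA, hB, rfl⟩
    rw [mul_div_assoc]
    exact mul_le_mul_of_nonneg_left (add_le_of_interference_constraints hm hn.le hA hB) hc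

end LinearProgram

lemma min_eq_left_of_lt_pred_mul {K M N : ℕ} (h : M < (K - 1) * N) :
    min (M : ℝ) (((K : ℝ) - 1) * N) = M := by
  have hK : 1 ≤ K := by
    by_contra! hK
    simp_all
  apply min_eq_left
  have : (M : ℝ) ≤ ((K - 1 : ℕ) : ℝ) * N := by exact_mod_cast h.le
  rwa [Nat.cast_sub hK, Nat.cast_one] at this

theorem stmt_3_general (K M N : ℕ) (hM : 0 < M)
    (h : M < (K - 1) * N) :
    IsGreatest {v : ℝ | ∃ l1 l2 : ℝ, l1 ∈ Set.Ioc (0 : ℝ) 1 ∧ l2 ∈ Set.Ioc (0 : ℝ) 1 ∧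
        l1 * ((N : ℝ) + min (M : ℝ) (((K : ℝ) - 1) * N)) + l2 * N ≤ M ∧
        l1 + l2 * (1 + (N : ℝ) / M) ≤ 1 ∧
        v = (K : ℝ) * N * (l1 + l2)}
      ((K : ℝ) * N * ((M : ℝ) ^ 2 + M * N) / ((M : ℝ) ^ 2 + (N : ℝ) ^ 2 + M * N)) := by
  have hN : 0 < N := Nat.pos_of_ne_zero (by rintro rfl; simp at h)
  rw [min_eq_left_of_lt_pred_mul h]
  exact isGreatest_interference_lp (by exact_mod_cast hM) (by exact_mod_cast hN) (by positivity)

theorem stmt_3 (K M N : ℕ) (hK : 2 ≤ K) (hM : 0 < M) (hN : 0 < N)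
    (h : M < (K - 1) * N) :
    IsGreatest {v : ℝ | ∃ l1 l2 : ℝ, l1 ∈ Set.Ioc (0 : ℝ) 1 ∧ l2 ∈ Set.Ioc (0 : ℝ) 1 ∧
        l1 * ((N : ℝ) + min (M : ℝ) (((K : ℝ) - 1) * N)) + l2 * N ≤ M ∧
        l1 + l2 * (1 + (N : ℝ) / M) ≤ 1 ∧
        v = (K : ℝ) * N * (l1 + l2)}
      ((K : ℝ) * N * ((M : ℝ) ^ 2 + M * N) / ((M : ℝ) ^ 2 + (N : ℝ) ^ 2 + M * N)) :=
  stmt_3_general K M N hM h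
end

section
/- Let K ≥ 2 be an integer and M, N positive integers with (K-2)N < M < (K-1)N. The linear program maximizing KN(λ₁+λ₂) over λ₁,λ₂ ∈ (0,1] subject to λ₁(N + min{M,(K-1)N}) ≤ M, λ₁(K-1)N + λ₂KN ≤ M, and λ₁+λ₂ ≤ 1 has optimal value (2MN+M²)/(M+N). -/
theorem stmt_4 (K M N : ℕ) (hK : 2 ≤ K) (hM : 0 < M) (hN : 0 < N)
    (h1 : (K - 2) * N < M) (h2 : M < (K - 1) * N) :
    IsGreatest {v : ℝ | ∃ l1 l2 : ℝ, l1 ∈ Set.Ioc (0 : ℝ) 1 ∧ l2 ∈ Set.Ioc (0 : ℝ) 1 ∧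
        l1 * ((N : ℝ) + min (M : ℝ) (((K : ℝ) - 1) * N)) ≤ M ∧
        l1 * (((K : ℝ) - 1) * N) + l2 * ((K : ℝ) * N) ≤ M ∧
        l1 + l2 ≤ 1 ∧
        v = (K : ℝ) * N * (l1 + l2)}
      ((2 * (M : ℝ) * N + (M : ℝ) ^ 2) / ((M : ℝ) + N)) := by
  have hKR : (2:ℝ) ≤ (K:ℝ) := by exact_mod_cast hK
  have hNR : (0:ℝ) < N := by exact_mod_cast hN
  have hMR : (0:ℝ) < M := by exact_mod_cast hM
  have h1R : ((K:ℝ)-2)*N < M := by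
    have h : ((K-2:ℕ):ℝ)*N < M := by exact_mod_cast h1
    rwa [Nat.cast_sub hK] at h
  have h2R : (M:ℝ) < ((K:ℝ)-1)*N := by
    have h : (M:ℝ) < ((K-1:ℕ):ℝ)*N := by exact_mod_cast h2
    rw [Nat.cast_sub (by omega), Nat.cast_one] at h
    exact h
  have hmin : min (M:ℝ) (((K:ℝ)-1)*N) = M := min_eq_left h2R.le
  have hMN : (0:ℝ) < (M:ℝ) + N := by linarith
  have hKpos : (0:ℝ) < (K:ℝ) := by linarith
  have hKN : (0:ℝ) < (K:ℝ)*N := by positivity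
  have hD : (0:ℝ) < (K:ℝ)*N*((M:ℝ)+N) := by positivity
  constructor
  · refine ⟨(M:ℝ)/((M:ℝ)+N), (M:ℝ)*((M:ℝ)-((K:ℝ)-2)*N)/((K:ℝ)*N*((M:ℝ)+N)),
      ⟨by positivity, ?_⟩, ⟨?_, ?_⟩, ?_, ?_, ?_, ?_⟩
    · rw [div_le_one hMN]; linarith
    · apply div_pos (by nlinarith) hD
    · rw [div_le_one hD]; nlinarith
    · rw [hmin, div_mul_eq_mul_div, div_le_iff₀ hMN]; ring_nf; linarith
    · rw [div_mul_eq_mul_div, div_mul_eq_mul_div, div_add_div _ _ hMN.ne' hD.ne',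
        div_le_iff₀ (by positivity)]
      ring_nf; linarith
    · rw [div_add_div _ _ hMN.ne' hD.ne', div_le_one (by positivity)]
      have key : (M:ℝ)*((M:ℝ)-((K:ℝ)-2)*N) ≤ (K:ℝ)*N^2 := by
        nlinarith [mul_le_mul h2R.le (show (M:ℝ)-((K:ℝ)-2)*(N:ℝ) ≤ (N:ℝ) by nlinarith)
          (by nlinarith) (by nlinarith : (0:ℝ) ≤ ((K:ℝ)-1)*N)]
      nlinarith [mul_le_mul_of_nonneg_left key hMN.le]
    · field_simp
      ring
  · rintro v ⟨l1, l2, hl1, hl2, c1, c2, _, hv⟩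
    rw [hmin] at c1
    rw [le_div_iff₀ hMN, hv]
    nlinarith [mul_le_mul_of_nonneg_left c2 hMN.le, mul_le_mul_of_nonneg_left c1 hNR.le]
end

section
/- Let K ≥ 2 be an integer and M, N positive integers with (K-1)N ≤ M < K²N/(K+1). The linear program maximizing KN(λ₁+λ₂) over λ₁,λ₂ ∈ (0,1] subject to λ₁(N + min{M,(K-1)N}) ≤ M, λ₁(K-1)N + λ₂KN ≤ M, and λ₁+λ₂ ≤ 1 has optimal value M + M/K. -/
theorem stmt_6 (K M N : ℕ) (hK : 2 ≤ K) (hM : 0 < M) (hN : 0 < N)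
    (h1 : (K - 1) * N ≤ M) (h2 : (M : ℝ) < (K : ℝ) ^ 2 * N / ((K : ℝ) + 1)) :
    IsGreatest {v : ℝ | ∃ l1 l2 : ℝ, l1 ∈ Set.Ioc (0 : ℝ) 1 ∧ l2 ∈ Set.Ioc (0 : ℝ) 1 ∧
        l1 * ((N : ℝ) + min (M : ℝ) (((K : ℝ) - 1) * N)) ≤ M ∧
        l1 * (((K : ℝ) - 1) * N) + l2 * ((K : ℝ) * N) ≤ M ∧
        l1 + l2 ≤ 1 ∧
        v = (K : ℝ) * N * (l1 + l2)}
      ((M : ℝ) + (M : ℝ) / K) := by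
  have hK1 : (2:ℝ) ≤ K := by exact_mod_cast hK
  have hN0 : (0:ℝ) < N := by exact_mod_cast hN
  have hM0 : (0:ℝ) < M := by exact_mod_cast hM
  have hK0 : (0:ℝ) < K := by linarith
  have hKN : (0:ℝ) < (K:ℝ) * N := by positivity
  have h1' : ((K:ℝ) - 1) * N ≤ M := by
    have h : (((K - 1) * N : ℕ) : ℝ) ≤ M := by exact_mod_cast h1
    rwa [Nat.cast_mul, Nat.cast_sub (by omega), Nat.cast_one] at h
  have hmin : min (M:ℝ) (((K:ℝ) - 1) * N) = ((K:ℝ) - 1) * N := min_eq_right h1'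
  have h2' : (M:ℝ) * ((K:ℝ) + 1) < (K:ℝ)^2 * N := by
    rw [lt_div_iff₀ (by linarith : (0:ℝ) < (K:ℝ) + 1)] at h2
    linarith
  have hMKN : (M:ℝ) ≤ (K:ℝ) * N := by nlinarith
  constructor
  · refine ⟨(M:ℝ)/((K:ℝ)*N), (M:ℝ)/((K:ℝ)^2*N), ⟨by positivity, ?_⟩,
      ⟨by positivity, ?_⟩, ?_, ?_, ?_, ?_⟩
    · rw [div_le_one hKN]; exact hMKN
    · rw [div_le_one (by positivity)]; nlinarith
    · rw [hmin]
      have he : (N:ℝ) + ((K:ℝ)-1)*N = (K:ℝ)*N := by ring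
      rw [he, div_mul_cancel₀ _ (ne_of_gt hKN)]
    · have : (M:ℝ)/((K:ℝ)*N) * (((K:ℝ)-1)*N) + (M:ℝ)/((K:ℝ)^2*N) * ((K:ℝ)*N) = M := by
        field_simp; ring
      linarith
    · rw [div_add_div _ _ (ne_of_gt hKN) (by positivity : ((K:ℝ)^2*N) ≠ 0),
        div_le_one (by positivity)]
      nlinarith
    · field_simp
  · rintro v ⟨l1, l2, ⟨hl1a, hl1b⟩, ⟨hl2a, hl2b⟩, hc1, hc2, hc3, rfl⟩
    rw [hmin] at hc1
    have h1K : l1 * ((K:ℝ)*N) ≤ M := by nlinarith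
    have hln : l1 * N ≤ (M:ℝ) / K := by rw [le_div_iff₀ hK0]; nlinarith
    nlinarith
end

section
/- For positive reals M, N and integer K ≥ 2 with M < (K-1)N: KN(M²+MN)/(M²+N²+MN) ≥ (2MN+M²)/(M+N) if and only if K ≥ M/N + 1 + N²/(M+N)². -/
theorem stmt_8 (M N : ℝ) (hM : 0 < M) (hN : 0 < N) (K : ℕ) (hK : 2 ≤ K)
    (h : M < ((K : ℝ) - 1) * N) :
    (K : ℝ) * N * (M ^ 2 + M * N) / (M ^ 2 + N ^ 2 + M * N) ≥
        (2 * M * N + M ^ 2) / (M + N) ↔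
      (K : ℝ) ≥ M / N + 1 + N ^ 2 / (M + N) ^ 2 := by
  have hMN : 0 < M + N := by linarith
  have hd1 : 0 < M ^ 2 + N ^ 2 + M * N := by positivity
  have hd2 : 0 < N * (M + N) ^ 2 := by positivity
  rw [ge_iff_le, div_le_div_iff₀ hMN hd1, ge_iff_le]
  constructor
  · intro h'
    rw [div_add' _ _ _ hN.ne', div_add_div _ _ (by positivity) (by positivity),
      div_le_iff₀ (by positivity)]
    nlinarith [sq_nonneg (M + N), mul_pos hM hN, mul_pos hMN hN]
  · intro h'
    rw [div_add' _ _ _ hN.ne', div_add_div _ _ (by positivity) (by positivity),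
      div_le_iff₀ (by positivity)] at h'
    nlinarith [sq_nonneg (M + N), mul_pos hM hN, mul_pos hMN hN]
end

section
/- For positive integers K ≥ 2, M, N, the self-interference-degraded achievable sum DoF, given by KN(M²+MN)/(M²+N²+MN) if M ≤ (K-1)N, KN·MK/(MK+KN−M) if (K-1)N ≤ M ≤ KN, and KN otherwise, is less than or equal to the lower bound of Theorem 1 in every regime. -/
/-- Achievable sum DoF lower bound of Theorem 1 for the (K,M,N) FD cellular network. -/
noncomputable def thm1LB (K M N : ℕ) : ℝ :=
  if M ≤ (K - 2) * N then
    (K : ℝ) * N * ((M : ℝ) ^ 2 + M * N) / ((M : ℝ) ^ 2 + (N : ℝ) ^ 2 + M * N)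
  else if M < (K - 1) * N then
    max (max ((K : ℝ) * N * ((M : ℝ) ^ 2 + M * N) / ((M : ℝ) ^ 2 + (N : ℝ) ^ 2 + M * N))
        ((2 * (M : ℝ) * N + (M : ℝ) ^ 2) / ((M : ℝ) + N)))
      (min ((M : ℝ) * K / ((K : ℝ) - 1)) (((K : ℝ) - 1) * N))
  else if (K + 1) * M < K ^ 2 * N then (M : ℝ) + (M : ℝ) / K
  else (K : ℝ) * N

/-- Achievable sum DoF in the presence of residual self-interference. -/
noncomputable def selfDoF (K M N : ℕ) : ℝ :=
  if M ≤ (K - 1) * N then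
    (K : ℝ) * N * ((M : ℝ) ^ 2 + M * N) / ((M : ℝ) ^ 2 + (N : ℝ) ^ 2 + M * N)
  else if M ≤ K * N then
    (K : ℝ) * N * ((M : ℝ) * K / ((M : ℝ) * K + (K : ℝ) * N - M))
  else (K : ℝ) * N

theorem stmt_14 (K M N : ℕ) (hK : 2 ≤ K) (hM : 0 < M) (hN : 0 < N) :
    selfDoF K M N ≤ thm1LB K M N := by
  obtain ⟨k, rfl⟩ : ∃ k, K = k + 2 := ⟨K - 2, by omega⟩
  have e1 : k + 2 - 1 = k + 1 := by omega
  have e2 : k + 2 - 2 = k := by omega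
  have hn : (1 : ℝ) ≤ (N : ℝ) := by exact_mod_cast hN
  have hm : (1 : ℝ) ≤ (M : ℝ) := by exact_mod_cast hM
  have hx : (0 : ℝ) ≤ (k : ℝ) := Nat.cast_nonneg k
  simp only [selfDoF, thm1LB, e1, e2]
  by_cases c1 : M ≤ (k + 1) * N
  · rw [if_pos c1]
    by_cases d1 : M ≤ k * N
    · rw [if_pos d1]
    · rw [if_neg d1]
      by_cases d2 : M < (k + 1) * N
      · rw [if_pos d2]
        exact (le_max_left _ _).trans (le_max_left _ _)
      · rw [if_neg d2]
        have hMeq : M = (k + 1) * N := le_antisymm c1 (not_lt.mp d2)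
        subst hMeq
        have d3 : (k + 2 + 1) * ((k + 1) * N) < (k + 2) ^ 2 * N := by
          have h1 : (k + 2 + 1) * ((k + 1) * N) = (k ^ 2 + 4 * k + 3) * N := by ring
          have h2 : (k + 2) ^ 2 * N = (k ^ 2 + 4 * k + 4) * N := by ring
          rw [h1, h2]
          exact (Nat.mul_lt_mul_right hN).mpr (by linarith)
        rw [if_pos d3]
        push_cast
        set n := (N : ℝ)
        set x := (k : ℝ)
        have hden : (0:ℝ) < ((x+1)*n) ^ 2 + n ^ 2 + (x+1)*n * n := by positivity
        have hkpos : (0:ℝ) < x + 2 := by linarith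
        have hrhs : (x+1)*n + (x+1)*n / (x+2) = ((x+1)*n*(x+3)) / (x+2) := by
          field_simp; ring
        rw [hrhs, div_le_div_iff₀ hden hkpos]
        nlinarith [show (0:ℝ) ≤ (x+1) * n^3 by positivity]
  · -- M > (k+1)*N
    have hd1 : ¬ M ≤ k * N := fun h => c1 (h.trans (Nat.mul_le_mul (by omega) (le_refl N)))
    have hd2 : ¬ M < (k + 1) * N := fun h => c1 h.le
    rw [if_neg c1, if_neg hd1, if_neg hd2]
    have hge : ((k:ℝ) + 1) * N ≤ (M : ℝ) := by
      have : (k + 1) * N ≤ M := (not_le.mp c1).le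
      exact_mod_cast this
    by_cases c2 : M ≤ (k + 2) * N
    · rw [if_pos c2]
      push_cast
      set n := (N : ℝ)
      set m := (M : ℝ)
      set x := (k : ℝ)
      have hden : (0:ℝ) < m * (x+2) + (x+2) * n - m := by nlinarith
      have hkpos : (0:ℝ) < x + 2 := by linarith
      have hlhs : (x+2) * n * (m * (x+2) / (m * (x+2) + (x+2) * n - m))
          = ((x+2) * n * (m * (x+2))) / (m * (x+2) + (x+2) * n - m) := by ring
      by_cases d3 : (k + 2 + 1) * M < (k + 2) ^ 2 * N
      · rw [if_pos d3]
        have hrhs : m + m / (x+2) = (m * (x+3)) / (x+2) := by field_simp; ring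
        rw [hlhs, hrhs, div_le_div_iff₀ hden hkpos]
        nlinarith [show (0:ℝ) ≤ m * (x+3) * (x+1) * (m - (x+1)*n) by
            have h1 : (0:ℝ) ≤ m - (x+1)*n := by linarith
            have h2 : (0:ℝ) ≤ m * (x+3) * (x+1) := by positivity
            exact mul_nonneg h2 h1,
          show (0:ℝ) < m * n by positivity]
      · rw [if_neg d3]
        have hle : m ≤ (x + 2) * n := by
          show (M:ℝ) ≤ ((k:ℝ) + 2) * (N:ℝ); exact_mod_cast c2
        rw [hlhs, div_le_iff₀ hden]
        nlinarith [mul_nonneg (show (0:ℝ) ≤ (x+2)*n by positivity)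
          (show (0:ℝ) ≤ (x+2)*n - m by linarith)]
    · rw [if_neg c2]
      have hd3 : ¬ (k + 2 + 1) * M < (k + 2) ^ 2 * N := by
        intro h
        have h1 : ((k:ℝ) + 2) * N < (M : ℝ) := by exact_mod_cast not_le.mp c2
        have h2 : ((k:ℝ) + 2 + 1) * M < ((k:ℝ) + 2) ^ 2 * N := by exact_mod_cast h
        nlinarith
      rw [if_neg hd3]
end

section
/- Let K ≥ 2 and M, N be positive integers with M ≥ K²N/(K+1). Then the linear program maximizing KN(λ₁+λ₂) subject to λ₂KN ≤ M, λ₁(N+min{M,K(N-1)}) ≤ M, λ₁+λ₂ ≤ 1, λ₁,λ₂ ∈ (0,1] (the no-BS-to-BS-interference program) has optimal value KN, and min{KN, max{M + KMN/(M+N), 2M}} = KN. -/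
theorem stmt_16 (K M N : ℕ) (hK : 2 ≤ K) (hM : 0 < M) (hN : 0 < N)
    (h : (K : ℝ) ^ 2 * N / ((K : ℝ) + 1) ≤ M) :
    IsGreatest {v : ℝ | ∃ l1 l2 : ℝ, l1 ∈ Set.Ioc (0 : ℝ) 1 ∧ l2 ∈ Set.Ioc (0 : ℝ) 1 ∧
        l2 * ((K : ℝ) * N) ≤ M ∧
        l1 * ((N : ℝ) + min (M : ℝ) ((K : ℝ) * ((N : ℝ) - 1))) ≤ M ∧
        l1 + l2 ≤ 1 ∧
        v = (K : ℝ) * N * (l1 + l2)}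
      ((K : ℝ) * N) ∧
    min ((K : ℝ) * N)
        (max ((M : ℝ) + (K : ℝ) * M * N / ((M : ℝ) + N)) (2 * (M : ℝ))) = (K : ℝ) * N := by
  set k : ℝ := (K : ℝ) with hk
  set m : ℝ := (M : ℝ) with hm
  set n : ℝ := (N : ℝ) with hn
  have hk2 : (2 : ℝ) ≤ k := by rw [hk]; exact_mod_cast hK
  have hm1 : (1 : ℝ) ≤ m := by rw [hm]; exact_mod_cast hM
  have hn1 : (1 : ℝ) ≤ n := by rw [hn]; exact_mod_cast hN
  have hk0 : (0 : ℝ) < k := by linarith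
  have hm0 : (0 : ℝ) < m := by linarith
  have hn0 : (0 : ℝ) < n := by linarith
  have hk1 : (0 : ℝ) < k + 1 := by linarith
  have h' : k ^ 2 * n ≤ m * (k + 1) := by
    rw [div_le_iff₀ hk1] at h; linarith
  have key : k * n ^ 2 ≤ m * (m + n) := by
    nlinarith [mul_le_mul h' h' (by positivity : (0:ℝ) ≤ k ^ 2 * n) (by positivity),
      mul_pos hm0 hn0, mul_pos hk0 hn0, sq_nonneg (k - 2), sq_nonneg n, mul_pos hk0 hm0,
      mul_nonneg (mul_nonneg hk0.le hn0.le) hn0.le]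
  have hnm : n ≤ m := by nlinarith
  have hkn0 : (0 : ℝ) < k * n := mul_pos hk0 hn0
  constructor
  · constructor
    · -- membership
      refine ⟨1 - min (1/2) (m / (k * n)), min (1/2) (m / (k * n)), ?_, ?_, ?_, ?_, ?_, ?_⟩
      · constructor
        · have : min (1/2 : ℝ) (m / (k * n)) ≤ 1/2 := min_le_left _ _
          linarith
        · have : (0 : ℝ) < min (1/2) (m / (k * n)) := lt_min (by norm_num) (by positivity)
          linarith
      · exact ⟨lt_min (by norm_num) (by positivity), le_trans (min_le_left _ _) (by norm_num)⟩
      · have h1 : min (1/2 : ℝ) (m / (k * n)) ≤ m / (k * n) := min_le_right _ _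
        calc min (1/2 : ℝ) (m / (k * n)) * (k * n) ≤ (m / (k * n)) * (k * n) :=
              mul_le_mul_of_nonneg_right h1 hkn0.le
          _ = m := div_mul_cancel₀ _ hkn0.ne'
      · -- l1 * A ≤ m
        have hA : n + min m (k * (n - 1)) ≤ n + m := by
          have := min_le_left m (k * (n - 1)); linarith
        have hA0 : (0 : ℝ) ≤ n + min m (k * (n - 1)) := by
          have h0 : (0:ℝ) ≤ min m (k * (n - 1)) :=
            le_min hm0.le (mul_nonneg hk0.le (by linarith))
          linarith
        have hl1nn : (0 : ℝ) ≤ 1 - min (1/2) (m / (k * n)) := by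
          have : min (1/2 : ℝ) (m / (k * n)) ≤ 1/2 := min_le_left _ _
          linarith
        have step : (1 - min (1/2) (m / (k * n))) * (n + min m (k * (n - 1)))
            ≤ (1 - min (1/2) (m / (k * n))) * (n + m) :=
          mul_le_mul_of_nonneg_left hA hl1nn
        refine step.trans ?_
        rcases le_total (1/2 : ℝ) (m / (k * n)) with hc | hc
        · rw [min_eq_left hc]; linarith
        · rw [min_eq_right hc]
          have expand : (1 - m / (k * n)) * (n + m) = ((k * n - m) * (n + m)) / (k * n) := by
            field_simp
          rw [expand, div_le_iff₀ hkn0]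
          nlinarith
      · have : (0 : ℝ) < min (1/2) (m / (k * n)) := lt_min (by norm_num) (by positivity)
        linarith
      · ring
    · -- upper bound
      rintro v ⟨l1, l2, h1, h2, h3, h4, h5, rfl⟩
      have : l1 + l2 ≤ 1 := h5
      nlinarith [hkn0]
  · -- min/max part
    have h1 : k * n ≤ m + k * m * n / (m + n) := by
      rw [← sub_le_iff_le_add', le_div_iff₀ (by linarith : (0:ℝ) < m + n)]
      nlinarith
    exact min_eq_left (le_trans h1 (le_max_left _ _))
end
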